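/- Fix a Fourier frequency k with ω/Cp < k < ω/Cs, and write ξ² = ω²/Cs² − k² with ξ > 0 (so λ₁ = iξ) and λ₂ = √(k² − ω²/Cp²) > 0. Then as δ → 0⁺ the convergence factor admits the first-order expansion ρ_cla(k, ω, Cp, Cs, δ) = 1 + (2ω²λ₂ξ²)/(Cp²(k⁴ + ξ²λ₂²)) · δ + O(δ²); in particular lim_{δ→0⁺} (ρ_cla(k, ω, Cp, Cs, δ) − 1)/δ = (2ω²λ₂ξ²)/(Cp²(k⁴ + ξ²λ₂²)), a strictly positive real number. -/

import Mathlib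

/-!
Splitting `√(X²(X² + 4E)) = ±X·√(X² + 4E)` only swaps `r₊` and `r₋`, so `ρ_cla` is the larger
of the moduli of `r± = X²/2 + E ± X·√(X² + 4E)/2`, and these are analytic in the overlap `δ`
near `0`, where `X = 0`, `E = 1` and `r± = 1`. Hence `|r±|` is real analytic at `0` with
derivative `Re r±'(0) = ±Re X'(0) − λ₂`, where `X'(0) = c (λ₂ − λ₁)` and
`c = (k² + λ₁λ₂)/(k² − λ₁λ₂)`. For `λ₁ = iξ` the slope of `|r₊|` is `C > 0` and that of `|r₋|`
is `−C − 2λ₂ < C`; so for small `δ > 0` the branch `|r₋|` stays below `1 + Cδ`, and the maximum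
inherits the second-order Taylor remainder of `|r₊|`.
-/

open Complex

/-- The convergence factor `ρ_cla(k, ω, Cp, Cs, δ) = max(|r₊|, |r₋|)` of the classical
Schwarz method for the time-harmonic Navier equations, where
`r± = X²/2 + e^{−δ(λ₁+λ₂)} ± (1/2)√(X²(X² + 4e^{−δ(λ₁+λ₂)}))`,
`X = ((k² + λ₁λ₂)/(k² − λ₁λ₂))(e^{−λ₁δ} − e^{−λ₂δ})`,
`λ₁ = √(k² − ω²/Cs²)`, `λ₂ = √(k² − ω²/Cp²)` (principal complex square roots). -/
noncomputable def rhoCla (Cp Cs ω k δ : ℝ) : ℝ :=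
  let l1 : ℂ := ((k ^ 2 - ω ^ 2 / Cs ^ 2 : ℝ) : ℂ) ^ (1 / 2 : ℂ)
  let l2 : ℂ := ((k ^ 2 - ω ^ 2 / Cp ^ 2 : ℝ) : ℂ) ^ (1 / 2 : ℂ)
  let X : ℂ := ((k : ℂ) ^ 2 + l1 * l2) / ((k : ℂ) ^ 2 - l1 * l2)
      * (Complex.exp (-l1 * δ) - Complex.exp (-l2 * δ))
  let E : ℂ := Complex.exp (-(δ : ℂ) * (l1 + l2))
  let s : ℂ := (X ^ 2 * (X ^ 2 + 4 * E)) ^ (1 / 2 : ℂ)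
  max ‖X ^ 2 / 2 + E + s / 2‖ ‖X ^ 2 / 2 + E - s / 2‖

open Filter Topology Asymptotics

open scoped RealInnerProductSpace

theorem AnalyticAt.isBigO_sub_sub_smul {𝕜 E : Type*} [NontriviallyNormedField 𝕜]
    [NormedAddCommGroup E] [NormedSpace 𝕜 E] {f : 𝕜 → E} {a : E} {x : 𝕜}
    (hf : AnalyticAt 𝕜 f x) (hd : HasDerivAt f a x) :
    (fun y => f y - f x - (y - x) • a) =O[𝓝 x] fun y => (y - x) ^ 2 := by
  obtain ⟨p, hp⟩ := hf
  have hcoeff : p.coeff 1 = a := hp.deriv.symm.trans hd.deriv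
  have hpartial : ∀ y, p.partialSum 2 y = f x + y • a := fun y => by
    simp [FormalMultilinearSeries.partialSum, Finset.sum_range_succ, ← hp.coeff_zero (fun _ => 1),
      hcoeff]
  have hshift : Tendsto (fun y => y - x) (𝓝 x) (𝓝 0) := tendsto_sub_nhds_zero_iff.2 tendsto_id
  refine (((hp.isBigO_sub_partialSum_pow 2).comp_tendsto hshift).congr_left fun y => ?_).trans
    (IsBigO.of_bound 1 (by simp))
  simp [hpartial, sub_sub]

open scoped ContDiff in
theorem AnalyticAt.norm {E F : Type*} [NormedAddCommGroup E] [NormedSpace ℝ E]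
    [NormedAddCommGroup F] [InnerProductSpace ℝ F] [CompleteSpace F] {f : E → F} {x : E}
    (hf : AnalyticAt ℝ f x) (h0 : f x ≠ 0) : AnalyticAt ℝ (fun y => ‖f y‖) x :=
  ((hf.contDiffAt (n := ω)).norm ℝ h0).analyticAt

theorem AnalyticAt.comp_ofReal {E : Type*} [NormedAddCommGroup E] [NormedSpace ℂ E]
    {g : ℂ → E} {x : ℝ} (hg : AnalyticAt ℂ g x) : AnalyticAt ℝ (fun t : ℝ => g t) x :=
  hg.restrictScalars.comp (ofRealCLM.analyticAt x)

theorem HasDerivAt.norm {F : Type*} [NormedAddCommGroup F] [InnerProductSpace ℝ F]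
    {f : ℝ → F} {f' : F} {x : ℝ} (hf : HasDerivAt f f' x) (h0 : f x ≠ 0) :
    HasDerivAt (fun y => ‖f y‖) (⟪f x, f'⟫ / ‖f x‖) x := by
  have h := hf.norm_sq.sqrt (pow_ne_zero 2 (norm_ne_zero_iff.2 h0))
  simp only [Real.sqrt_sq (norm_nonneg _)] at h
  exact h.congr_deriv (by field_simp)

theorem HasDerivWithinAt.eventually_lt_add_mul {g : ℝ → ℝ} {b a x : ℝ}
    (hg : HasDerivWithinAt g b (Set.Ioi x) x) (hba : b < a) :
    ∀ᶠ y in 𝓝[>] x, g y < g x + a * (y - x) := by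
  filter_upwards [hg.limsup_slope_le' (lt_irrefl x) hba, self_mem_nhdsWithin] with y hy hxy
  rw [slope_def_field, div_lt_iff₀ (sub_pos.2 hxy)] at hy
  linarith

theorem Asymptotics.IsBigO.max_sub_of_eventually_le {α E : Type*} [Norm E] {l : Filter α}
    {f g p : α → ℝ} {u : α → E} (h : (fun x => f x - p x) =O[l] u)
    (hg : ∀ᶠ x in l, g x ≤ p x) : (fun x => max (f x) (g x) - p x) =O[l] u := by
  refine IsBigO.trans (IsBigO.of_bound 1 ?_) h
  filter_upwards [hg] with x hx
  rw [one_mul, Real.norm_eq_abs, Real.norm_eq_abs, abs_le, sub_le_iff_le_add]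
  exact ⟨by linarith [neg_abs_le (f x - p x), le_max_left (f x) (g x)],
    max_le (by linarith [le_abs_self (f x - p x)]) (by linarith [abs_nonneg (f x - p x)])⟩

theorem tendsto_sub_div_of_isBigO_sq {l : Filter ℝ} {F : ℝ → ℝ} {a b : ℝ}
    (hl : l ≤ 𝓝[≠] 0) (h : (fun x => F x - (b + a * x)) =O[l] fun x => x ^ 2) :
    Tendsto (fun x => (F x - b) / x) l (𝓝 a) := by
  have hrem : Tendsto (fun x => (F x - (b + a * x)) * x⁻¹) l (𝓝 0) := by
    refine (h.mul (isBigO_refl (fun x : ℝ => x⁻¹) l)).trans_tendsto ?_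
    refine (tendsto_id.mono_left (hl.trans nhdsWithin_le_nhds)).congr fun x => ?_
    rcases eq_or_ne x 0 with rfl | hx
    · simp
    · simp [sq, hx]
  refine (by simpa using hrem.const_add a : Tendsto _ l (𝓝 a)).congr' ?_
  filter_upwards [hl self_mem_nhdsWithin] with x (hx : x ≠ 0)
  field_simp
  ring

theorem Complex.sq_cpow_one_div_two_eq_or (u : ℂ) :
    (u ^ 2) ^ (1 / 2 : ℂ) = u ∨ (u ^ 2) ^ (1 / 2 : ℂ) = -u :=
  sq_eq_sq_iff_eq_or_eq_neg.1 (by rw [one_div, cpow_ofNat_inv_pow])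

theorem Complex.ofReal_sq_cpow_one_div_two {b : ℝ} (hb : 0 ≤ b) :
    ((b ^ 2 : ℝ) : ℂ) ^ (1 / 2 : ℂ) = b := by
  have harg := arg_ofReal_of_nonneg hb
  rw [ofReal_pow, one_div, pow_cpow_ofNat_inv (by rw [harg]; linarith [Real.pi_pos])
    (by rw [harg]; positivity)]

theorem Complex.ofReal_neg_sq_cpow_one_div_two {ξ : ℝ} (hξ : 0 < ξ) :
    ((-ξ ^ 2 : ℝ) : ℂ) ^ (1 / 2 : ℂ) = I * ξ := by
  have harg : arg (I * ξ) = Real.pi / 2 := by rw [mul_comm, arg_real_mul _ hξ, arg_I]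
  rw [show ((-ξ ^ 2 : ℝ) : ℂ) = (I * ξ) ^ 2 by push_cast; rw [mul_pow, I_sq]; ring, one_div,
    pow_cpow_ofNat_inv (by rw [harg]; linarith [Real.pi_pos]) (by rw [harg])]

namespace ClassicalSchwarz

variable (κ l₁ l₂ : ℂ)

/- `coupling`, `decay` and `branch (±1)` are `X`, `e^{−z(λ₁+λ₂)}` and `r±` of `rhoCla` as
functions of the overlap `z`, with `κ = k²`. -/
noncomputable def coupling (z : ℂ) : ℂ :=
  (κ + l₁ * l₂) / (κ - l₁ * l₂) * (exp (-l₁ * z) - exp (-l₂ * z))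

noncomputable def decay (z : ℂ) : ℂ := exp (-z * (l₁ + l₂))

noncomputable def branch (ε z : ℂ) : ℂ :=
  coupling κ l₁ l₂ z ^ 2 / 2 + decay l₁ l₂ z
    + ε * (coupling κ l₁ l₂ z * (coupling κ l₁ l₂ z ^ 2 + 4 * decay l₁ l₂ z) ^ (1 / 2 : ℂ)) / 2

@[simp] theorem coupling_zero : coupling κ l₁ l₂ 0 = 0 := by simp [coupling]

@[simp] theorem decay_zero : decay l₁ l₂ 0 = 1 := by simp [decay]

@[simp] theorem branch_zero (ε : ℂ) : branch κ l₁ l₂ ε 0 = 1 := by simp [branch]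

theorem rhoCla_eq_max_norm_branch {Cp Cs ω k : ℝ} {l₁ l₂ : ℂ}
    (h₁ : ((k ^ 2 - ω ^ 2 / Cs ^ 2 : ℝ) : ℂ) ^ (1 / 2 : ℂ) = l₁)
    (h₂ : ((k ^ 2 - ω ^ 2 / Cp ^ 2 : ℝ) : ℂ) ^ (1 / 2 : ℂ) = l₂) (δ : ℝ) :
    rhoCla Cp Cs ω k δ
      = max ‖branch ((k : ℂ) ^ 2) l₁ l₂ 1 δ‖ ‖branch ((k : ℂ) ^ 2) l₁ l₂ (-1) δ‖ := by
  set X := coupling ((k : ℂ) ^ 2) l₁ l₂ δ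
  set W := X ^ 2 + 4 * decay l₁ l₂ δ
  have hroot : (X ^ 2 * W) ^ (1 / 2 : ℂ) = X * W ^ (1 / 2 : ℂ)
      ∨ (X ^ 2 * W) ^ (1 / 2 : ℂ) = -(X * W ^ (1 / 2 : ℂ)) := by
    rw [← show (X * W ^ (1 / 2 : ℂ)) ^ 2 = X ^ 2 * W by rw [mul_pow, one_div, cpow_ofNat_inv_pow]]
    exact sq_cpow_one_div_two_eq_or _
  simp only [rhoCla, h₁, h₂]
  change max ‖X ^ 2 / 2 + decay l₁ l₂ δ + (X ^ 2 * W) ^ (1 / 2 : ℂ) / 2‖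
    ‖X ^ 2 / 2 + decay l₁ l₂ δ - (X ^ 2 * W) ^ (1 / 2 : ℂ) / 2‖ = _
  rcases hroot with h | h <;> rw [h]
  · congr 2 <;> simp only [branch] <;> ring
  · rw [max_comm]; congr 2 <;> simp only [branch] <;> ring

theorem hasDerivAt_coupling :
    HasDerivAt (coupling κ l₁ l₂) ((κ + l₁ * l₂) / (κ - l₁ * l₂) * (l₂ - l₁)) 0 := by
  have hexp (l : ℂ) : HasDerivAt (fun z => exp (-l * z)) (-l) 0 := by
    simpa using ((hasDerivAt_id (0 : ℂ)).const_mul (-l)).cexp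
  exact (((hexp l₁).sub (hexp l₂)).const_mul _).congr_deriv (by ring)

theorem hasDerivAt_decay : HasDerivAt (decay l₁ l₂) (-(l₁ + l₂)) 0 := by
  unfold decay
  simpa using ((hasDerivAt_id (0 : ℂ)).neg.mul_const (l₁ + l₂)).cexp

theorem analyticAt_branch (ε : ℂ) : AnalyticAt ℂ (branch κ l₁ l₂ ε) 0 := by
  have hX : AnalyticAt ℂ (coupling κ l₁ l₂) 0 := by unfold coupling; fun_prop
  have hE : AnalyticAt ℂ (decay l₁ l₂) 0 := by unfold decay; fun_prop
  have hsqrt :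
      AnalyticAt ℂ (fun z => (coupling κ l₁ l₂ z ^ 2 + 4 * decay l₁ l₂ z) ^ (1 / 2 : ℂ)) 0 :=
    ((hX.pow 2).add (analyticAt_const.mul hE)).cpow analyticAt_const (by simp [slitPlane])
  unfold branch
  fun_prop

theorem hasDerivAt_branch (ε : ℂ) :
    HasDerivAt (branch κ l₁ l₂ ε)
      (ε * ((κ + l₁ * l₂) / (κ - l₁ * l₂) * (l₂ - l₁)) - (l₁ + l₂)) 0 := by
  have hX := hasDerivAt_coupling κ l₁ l₂
  have hW := (hX.pow 2).add ((hasDerivAt_decay l₁ l₂).const_mul 4)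
  have hsqrt := hW.cpow_const (c := 1 / 2) (by simp [slitPlane])
  have htwo : (4 : ℂ) ^ (2⁻¹ : ℂ) = 2 := by
    rw [show (4 : ℂ) = 2 ^ 2 by norm_num, sq_cpow_two_inv (by norm_num)]
  refine (((hX.pow 2).div_const 2).add (hasDerivAt_decay l₁ l₂) |>.add
    (((hX.mul hsqrt).const_mul ε).div_const 2)).congr_deriv ?_
  simp [htwo]
  ring

theorem analyticAt_norm_branch (ε : ℂ) :
    AnalyticAt ℝ (fun δ : ℝ => ‖branch κ l₁ l₂ ε δ‖) 0 :=
  AnalyticAt.norm (AnalyticAt.comp_ofReal (by simpa using analyticAt_branch κ l₁ l₂ ε))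
    (by simp)

theorem hasDerivAt_norm_branch (ε : ℂ) :
    HasDerivAt (fun δ : ℝ => ‖branch κ l₁ l₂ ε δ‖)
      (ε * ((κ + l₁ * l₂) / (κ - l₁ * l₂) * (l₂ - l₁)) - (l₁ + l₂)).re 0 := by
  have h := (HasDerivAt.comp_ofReal (z := 0) (by simpa using hasDerivAt_branch κ l₁ l₂ ε)).norm
    (by simp)
  simpa [Complex.inner] using h

theorem isBigO_max_norm_branch_sub {a : ℝ}
    (hplus : ((κ + l₁ * l₂) / (κ - l₁ * l₂) * (l₂ - l₁) - (l₁ + l₂)).re = a)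
    (hminus : (-((κ + l₁ * l₂) / (κ - l₁ * l₂) * (l₂ - l₁)) - (l₁ + l₂)).re < a) :
    (fun δ : ℝ => max ‖branch κ l₁ l₂ 1 δ‖ ‖branch κ l₁ l₂ (-1) δ‖ - (1 + a * δ))
      =O[𝓝[>] 0] fun δ => δ ^ 2 := by
  have htaylor := (analyticAt_norm_branch κ l₁ l₂ 1).isBigO_sub_sub_smul
    (by simpa [hplus] using hasDerivAt_norm_branch κ l₁ l₂ 1)
  refine IsBigO.max_sub_of_eventually_le ?_ ?_
  · simpa [sub_sub, mul_comm] using htaylor.mono nhdsWithin_le_nhds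
  · filter_upwards [(hasDerivAt_norm_branch κ l₁ l₂ (-1)).hasDerivWithinAt.eventually_lt_add_mul
      (by simpa using hminus)] with δ hδ
    simpa using hδ.le

theorem re_coupling_deriv (k ξ b : ℝ) (hk : k ≠ 0) :
    (((k : ℂ) ^ 2 + I * ξ * b) / ((k : ℂ) ^ 2 - I * ξ * b) * (b - I * ξ)).re
      = b + 2 * b * ξ ^ 2 * (k ^ 2 - b ^ 2) / (k ^ 4 + ξ ^ 2 * b ^ 2) := by
  rw [← ofReal_pow, div_mul_eq_mul_div, div_re]
  simp only [normSq_apply, mul_re, mul_im, add_re, add_im, sub_re, sub_im, ofReal_re, ofReal_im,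
    I_re, I_im]
  ring_nf
  field_simp
  ring

end ClassicalSchwarz

theorem schwarz_convergence_factor_first_order_expansion_general
    (μ lam ρ ω : ℝ) (hμ : 0 < μ) (hlam : 0 < lam) (hρ : 0 < ρ) (hω : 0 < ω)
    (Cp Cs : ℝ) (hCp : Cp = Real.sqrt ((lam + 2 * μ) / ρ))
    (k : ℝ) (hk : ω / Cp < k ∧ k < ω / Cs)
    (ξ lam2 : ℝ)
    (hξ : ξ = Real.sqrt (ω ^ 2 / Cs ^ 2 - k ^ 2))
    (hlam2 : lam2 = Real.sqrt (k ^ 2 - ω ^ 2 / Cp ^ 2))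
    (C : ℝ)
    (hC : C = 2 * ω ^ 2 * lam2 * ξ ^ 2 / (Cp ^ 2 * (k ^ 4 + ξ ^ 2 * lam2 ^ 2))) :
    (fun δ : ℝ => rhoCla Cp Cs ω k δ - (1 + C * δ)) =O[𝓝[>] (0 : ℝ)] (fun δ : ℝ => δ ^ 2)
      ∧ Tendsto (fun δ : ℝ => (rhoCla Cp Cs ω k δ - 1) / δ) (𝓝[>] (0 : ℝ)) (𝓝 C)
      ∧ 0 < C := by
  obtain ⟨hk₁, hk₂⟩ := hk
  have hCp₀ : 0 < Cp := hCp ▸ Real.sqrt_pos.2 (by positivity)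
  have hk₀ : 0 < k := (div_pos hω hCp₀).trans hk₁
  have hks : k ^ 2 < ω ^ 2 / Cs ^ 2 := div_pow ω Cs 2 ▸ pow_lt_pow_left₀ hk₂ hk₀.le two_ne_zero
  have hkp : ω ^ 2 / Cp ^ 2 < k ^ 2 :=
    div_pow ω Cp 2 ▸ pow_lt_pow_left₀ hk₁ (div_pos hω hCp₀).le two_ne_zero
  have hξ₀ : 0 < ξ := hξ ▸ Real.sqrt_pos.2 (by linarith)
  have hlam2₀ : 0 < lam2 := hlam2 ▸ Real.sqrt_pos.2 (by linarith)
  have hξsq : k ^ 2 - ω ^ 2 / Cs ^ 2 = -ξ ^ 2 := by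
    rw [hξ, Real.sq_sqrt (by linarith)]; ring
  have hlam2sq : k ^ 2 - ω ^ 2 / Cp ^ 2 = lam2 ^ 2 := by rw [hlam2, Real.sq_sqrt (by linarith)]
  have hslope : 2 * lam2 * ξ ^ 2 * (k ^ 2 - lam2 ^ 2) / (k ^ 4 + ξ ^ 2 * lam2 ^ 2) = C := by
    rw [hC, show ω ^ 2 = Cp ^ 2 * (k ^ 2 - lam2 ^ 2) by field_simp at hlam2sq ⊢; linarith]
    field_simp
  have hC₀ : 0 < C := hC ▸ by positivity
  have hO : (fun δ : ℝ => rhoCla Cp Cs ω k δ - (1 + C * δ)) =O[𝓝[>] (0 : ℝ)] (· ^ 2) := by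
    simp only [ClassicalSchwarz.rhoCla_eq_max_norm_branch
      (hξsq ▸ Complex.ofReal_neg_sq_cpow_one_div_two hξ₀)
      (hlam2sq ▸ Complex.ofReal_sq_cpow_one_div_two hlam2₀.le)]
    apply ClassicalSchwarz.isBigO_max_norm_branch_sub <;>
      simp only [sub_re, neg_re, add_re, mul_re, I_re, I_im, ofReal_re, ofReal_im,
        ClassicalSchwarz.re_coupling_deriv k ξ lam2 hk₀.ne'] <;>
      linarith
  exact ⟨hO, tendsto_sub_div_of_isBigO_sq (nhdsGT_le_nhdsNE 0) hO, hC₀⟩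

/-- for a fixed intermediate frequency `ω/Cp < k < ω/Cs`, writing
`ξ = √(ω²/Cs² − k²) > 0` (so `λ₁ = iξ`) and `λ₂ = √(k² − ω²/Cp²) > 0`, the convergence
factor admits, as `δ → 0⁺`, the first-order expansion
`ρ_cla = 1 + (2ω²λ₂ξ²)/(Cp²(k⁴ + ξ²λ₂²))·δ + O(δ²)`; in particular
`lim_{δ→0⁺} (ρ_cla − 1)/δ = (2ω²λ₂ξ²)/(Cp²(k⁴ + ξ²λ₂²)) > 0`. -/
theorem schwarz_convergence_factor_first_order_expansion
    (μ lam ρ ω : ℝ) (hμ : 0 < μ) (hlam : 0 < lam) (hρ : 0 < ρ) (hω : 0 < ω)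
    (Cp Cs : ℝ) (hCp : Cp = Real.sqrt ((lam + 2 * μ) / ρ)) (hCs : Cs = Real.sqrt (μ / ρ))
    (k : ℝ) (hk : ω / Cp < k ∧ k < ω / Cs)
    (ξ lam2 : ℝ)
    (hξ : ξ = Real.sqrt (ω ^ 2 / Cs ^ 2 - k ^ 2))
    (hlam2 : lam2 = Real.sqrt (k ^ 2 - ω ^ 2 / Cp ^ 2))
    (C : ℝ)
    (hC : C = 2 * ω ^ 2 * lam2 * ξ ^ 2 / (Cp ^ 2 * (k ^ 4 + ξ ^ 2 * lam2 ^ 2))) :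
    (fun δ : ℝ => rhoCla Cp Cs ω k δ - (1 + C * δ)) =O[𝓝[>] (0 : ℝ)] (fun δ : ℝ => δ ^ 2)
      ∧ Tendsto (fun δ : ℝ => (rhoCla Cp Cs ω k δ - 1) / δ) (𝓝[>] (0 : ℝ)) (𝓝 C)
      ∧ 0 < C :=
  schwarz_convergence_factor_first_order_expansion_general μ lam ρ ω hμ hlam hρ hω Cp Cs hCp k hk ξ
    lam2 hξ hlam2 C hC
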